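/- Semantic dereliction: if φ ⊩_B^L ψ then !φ ⊩_B^L ψ. -/

import Mathlib

abbrev Atom := ℕ
abbrev ASeq := Multiset Atom × Atom
abbrev Box := Multiset ASeq
abbrev ARule := Multiset Box × Box × Atom
abbrev Base := Set ARule

/-- An atom `d` is persistent in `B` if there is a rule `⟨∅, S, d⟩ ∈ B` with `S` nonempty. -/
def Persistent (B : Base) (d : Atom) : Prop :=
  ∃ S : Box, S ≠ 0 ∧ ((0 : Multiset Box), S, d) ∈ B

/-- Atomic derivability in a base. -/
inductive Deriv (B : Base) : Multiset Atom → Atom → Prop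
  | ref (p : Atom) : Deriv B {p} p
  | app (S : Box) (p : Atom)
      (bc : List (Box × Multiset Atom))
      (dc : List (Atom × Multiset Atom))
      (hrule : ((↑(bc.map Prod.fst) : Multiset Box), S, p) ∈ B)
      (hpers : ∀ x ∈ dc, Persistent B x.1)
      (hbox : ∀ x ∈ bc, ∀ s ∈ x.1, Deriv B (x.2 + s.1) s.2)
      (hd : ∀ x ∈ dc, Deriv B x.2 x.1)
      (hS : ∀ s ∈ S, Deriv B ((↑(dc.map Prod.fst) : Multiset Atom) + s.1) s.2) :
      Deriv B ((bc.map Prod.snd).sum + (dc.map Prod.snd).sum) p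

/-- Formulas of intuitionistic linear logic. -/
inductive Fml : Type
  | atom : Atom → Fml
  | top : Fml
  | zero : Fml
  | one : Fml
  | limp : Fml → Fml → Fml
  | tens : Fml → Fml → Fml
  | wth : Fml → Fml → Fml
  | plus : Fml → Fml → Fml
  | bang : Fml → Fml
deriving DecidableEq

/-- The degree of a formula. -/
def deg : Fml → ℕ
  | .atom _ => 1
  | .top => 2
  | .zero => 2
  | .one => 2
  | .limp φ ψ => deg φ + deg ψ + 1
  | .tens φ ψ => deg φ + deg ψ + 1
  | .wth φ ψ => deg φ + deg ψ + 1
  | .plus φ ψ => deg φ + deg ψ + 1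
  | .bang φ => deg φ + 1

theorem one_le_deg (φ : Fml) : 1 ≤ deg φ := by
  cases φ <;> simp [deg] <;> omega

mutual
  /-- Support `⊩_B^L φ` (empty left-hand side). -/
  def Supp : Base → Multiset Atom → Fml → Prop
    | B, L, .atom p => Deriv B L p
    | _, _, .top => True
    | B, L, .zero => ∀ (K : Multiset Atom) (p : Atom), Supp B (L + K) (.atom p)
    | B, L, .one => ∀ C : Base, B ⊆ C → ∀ (K : Multiset Atom) (p : Atom),
        Supp C K (.atom p) → Supp C (L + K) (.atom p)
    | B, L, .limp φ ψ => SuppInf1 B L φ ψ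
    | B, L, .tens φ ψ => ∀ C : Base, B ⊆ C → ∀ (K : Multiset Atom) (p : Atom),
        SuppInf2 C K φ ψ (.atom p) → Supp C (L + K) (.atom p)
    | B, L, .wth φ ψ => Supp B L φ ∧ Supp B L ψ
    | B, L, .plus φ ψ => ∀ C : Base, B ⊆ C → ∀ (K : Multiset Atom) (p : Atom),
        SuppInf1 C K φ (.atom p) → SuppInf1 C K ψ (.atom p) → Supp C (L + K) (.atom p)
    | B, L, .bang φ => ∀ C : Base, B ⊆ C → ∀ (K : Multiset Atom) (p : Atom),
        (∀ D : Base, C ⊆ D → Supp D 0 φ → Supp D K (.atom p)) → Supp C (L + K) (.atom p)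
  termination_by B L φ => 2 * deg φ
  decreasing_by
    all_goals
      try simp only [deg]
      try have h1 := one_le_deg φ
      try have h2 := one_le_deg ψ
      try have h3 := one_le_deg χ
      try have h4 := one_le_deg α
      try have h5 := one_le_deg β
      omega

  /-- The (Inf) clause for a singleton context `{φ} ⊩_B^L χ`. -/
  def SuppInf1 : Base → Multiset Atom → Fml → Fml → Prop
    | B, L, .bang α, χ => ∀ C : Base, B ⊆ C → Supp C 0 α → Supp C L χ
    | B, L, φ, χ => ∀ C : Base, B ⊆ C → ∀ K : Multiset Atom,
        Supp C K φ → Supp C (L + K) χ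
  termination_by B L φ χ => 2 * (deg φ + deg χ) - 1
  decreasing_by
    all_goals
      try simp only [deg]
      try have h1 := one_le_deg φ
      try have h2 := one_le_deg ψ
      try have h3 := one_le_deg χ
      try have h4 := one_le_deg α
      try have h5 := one_le_deg β
      omega

  /-- The (Inf) clause for a two-element context `{φ, ψ} ⊩_B^L χ`. -/
  def SuppInf2 : Base → Multiset Atom → Fml → Fml → Fml → Prop
    | B, L, .bang α, .bang β, χ => ∀ C : Base, B ⊆ C →
        Supp C 0 α → Supp C 0 β → Supp C L χ
    | B, L, .bang α, ψ, χ => ∀ C : Base, B ⊆ C → ∀ K : Multiset Atom,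
        Supp C 0 α → Supp C K ψ → Supp C (L + K) χ
    | B, L, φ, .bang β, χ => ∀ C : Base, B ⊆ C → ∀ K : Multiset Atom,
        Supp C 0 β → Supp C K φ → Supp C (L + K) χ
    | B, L, φ, ψ, χ => ∀ C : Base, B ⊆ C → ∀ K₁ K₂ : Multiset Atom,
        Supp C K₁ φ → Supp C K₂ ψ → Supp C (L + K₁ + K₂) χ
  termination_by B L φ ψ χ => 2 * (deg φ + deg ψ + deg χ) - 1
  decreasing_by
    all_goals
      try simp only [deg]
      try have h1 := one_le_deg φ
      try have h2 := one_le_deg ψ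
      try have h3 := one_le_deg χ
      try have h4 := one_le_deg α
      try have h5 := one_le_deg β
      omega
end

/-- Is the formula a `!`-formula? -/
def isBang : Fml → Bool
  | .bang _ => true
  | _ => false

/-- Strip a top-level `!`. -/
def unbang : Fml → Fml
  | .bang φ => φ
  | φ => φ

/-- Support for a multiset of formulas: the `(⊎)` clause. -/
def SuppMS (B : Base) (L : Multiset Atom) (Γ : Multiset Fml) : Prop :=
  ∃ l : List (Fml × Multiset Atom), (↑(l.map Prod.fst) : Multiset Fml) = Γ ∧
    (l.map Prod.snd).sum = L ∧ ∀ x ∈ l, Supp B x.2 x.1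

/-- The official (Inf) clause: `Γ ⊩_B^L φ`, where `Γ = !Δ ⊎ Θ`. -/
def SuppSeq (B : Base) (L : Multiset Atom) (Γ : Multiset Fml) (φ : Fml) : Prop :=
  ∀ C : Base, B ⊆ C → ∀ K : Multiset Atom,
    SuppMS C 0 ((Γ.filter (fun ψ => isBang ψ = true)).map unbang) →
    SuppMS C K (Γ.filter (fun ψ => isBang ψ = false)) →
    Supp C (L + K) φ

/-- Validity of a sequent `(Γ : φ)`. -/
def Valid (Γ : Multiset Fml) (φ : Fml) : Prop :=
  ∀ B : Base, SuppSeq B 0 Γ φ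



section Aux

set_option maxHeartbeats 1000000 in
theorem deriv_mono {B B' : Base} (hBB : B ⊆ B') {L : Multiset Atom} {p : Atom}
    (h : Deriv B L p) : Deriv B' L p := by
  induction h with
  | ref p => exact Deriv.ref p
  | app S p bc dc hrule hpers hbox hd hS ihbox ihd ihS =>
      refine Deriv.app S p bc dc (hBB hrule) ?_ ihbox ihd ihS
      intro x hx
      obtain ⟨S', hS', hmem⟩ := hpers x hx
      exact ⟨S', hS', hBB hmem⟩

theorem si1_nb {φ : Fml} (hnb : ∀ α, φ ≠ .bang α) (B : Base) (L : Multiset Atom) (χ : Fml) :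
    SuppInf1 B L φ χ ↔ ∀ C : Base, B ⊆ C → ∀ K : Multiset Atom,
      Supp C K φ → Supp C (L + K) χ := by
  cases φ
  case bang α => exact absurd rfl (hnb α)
  all_goals (rw [SuppInf1]; exact fun _ h' => Fml.noConfusion h')

theorem si1_bang {α : Fml} (B : Base) (L : Multiset Atom) (χ : Fml) :
    SuppInf1 B L (.bang α) χ ↔ ∀ C : Base, B ⊆ C → Supp C 0 α → Supp C L χ := by
  rw [SuppInf1]

theorem suppInf1_mono {B B' : Base} (hBB : B ⊆ B') {L φ χ} (h : SuppInf1 B L φ χ) :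
    SuppInf1 B' L φ χ := by
  by_cases hb : ∃ α, φ = .bang α
  · obtain ⟨α, rfl⟩ := hb
    rw [si1_bang] at h ⊢
    exact fun C hC => h C (hBB.trans hC)
  · push_neg at hb
    rw [si1_nb hb] at h ⊢
    exact fun C hC => h C (hBB.trans hC)

theorem suppInf2_mono {B B' : Base} (hBB : B ⊆ B') {L φ ψ χ} (h : SuppInf2 B L φ ψ χ) :
    SuppInf2 B' L φ ψ χ := by
  cases φ <;> cases ψ <;>
    (rw [SuppInf2] at h ⊢ <;> try exact fun _ h' => Fml.noConfusion h') <;>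
    (try exact fun C hC => h C (hBB.trans hC)) <;>
    (try exact fun _ _ h' => Fml.noConfusion h') <;>
    (try simp)

theorem supp_mono : ∀ (φ : Fml) {B B' : Base}, B ⊆ B' → ∀ {L : Multiset Atom},
    Supp B L φ → Supp B' L φ
  | .atom p, _, _, hBB, _, h => by rw [Supp] at h ⊢; exact deriv_mono hBB h
  | .top, _, _, _, _, _ => by rw [Supp]; trivial
  | .zero, _, _, hBB, _, h => by
      rw [Supp] at h ⊢
      intro K p
      have := h K p
      rw [Supp] at this ⊢
      exact deriv_mono hBB this
  | .one, _, _, hBB, _, h => by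
      rw [Supp] at h ⊢; exact fun C hC => h C (hBB.trans hC)
  | .limp φ ψ, _, _, hBB, _, h => by
      rw [Supp] at h ⊢; exact suppInf1_mono hBB h
  | .tens φ ψ, _, _, hBB, _, h => by
      rw [Supp] at h ⊢; exact fun C hC => h C (hBB.trans hC)
  | .wth φ ψ, _, _, hBB, _, h => by
      rw [Supp] at h ⊢; exact ⟨supp_mono φ hBB h.1, supp_mono ψ hBB h.2⟩
  | .plus φ ψ, _, _, hBB, _, h => by
      rw [Supp] at h ⊢; exact fun C hC => h C (hBB.trans hC)
  | .bang φ, _, _, hBB, _, h => by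
      rw [Supp] at h ⊢; exact fun C hC => h C (hBB.trans hC)

/-- Applying a singleton (Inf) clause with atomic conclusion. -/
theorem si1_elim {C D : Base} {K : Multiset Atom} {χ : Fml} {p : Atom}
    (hInf : SuppInf1 C K χ (.atom p)) (hCD : C ⊆ D) {M : Multiset Atom}
    (hχ : Supp D M χ) : Supp D (K + M) (.atom p) := by
  by_cases hb : ∃ β, χ = .bang β
  · obtain ⟨β, rfl⟩ := hb
    rw [si1_bang] at hInf
    rw [Supp] at hχ
    have := hχ D (fun _ hx => hx) K p
      (fun E hDE hβ => hInf E (hCD.trans hDE) hβ)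
    rwa [add_comm] at this
  · push_neg at hb
    rw [si1_nb hb] at hInf
    exact hInf D hCD M hχ

/-- The expansion ("closure under atomic consequence") lemma. -/
theorem exp : ∀ (φ : Fml) {B : Base} {L : Multiset Atom},
    (∀ C : Base, B ⊆ C → ∀ (K : Multiset Atom) (p : Atom),
      SuppInf1 C K φ (.atom p) → Supp C (L + K) (.atom p)) → Supp B L φ
  | .atom q, B, L, hyp => by
      have h := hyp B (fun _ h => h) 0 q ?_
      · rwa [add_zero] at h
      · rw [si1_nb (fun _ h => Fml.noConfusion h)]
        intro D _ K' hD
        rwa [zero_add]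
  | .top, B, L, hyp => by rw [Supp]; trivial
  | .zero, B, L, hyp => by
      rw [Supp]
      intro K p
      refine hyp B (fun _ h => h) K p ?_
      rw [si1_nb (fun _ h => Fml.noConfusion h)]
      intro D _ K' hD
      rw [Supp] at hD
      have := hD K p
      rwa [add_comm] at this
  | .one, B, L, hyp => by
      rw [Supp]
      intro C hC K p hK
      refine hyp C hC K p ?_
      rw [si1_nb (fun _ h => Fml.noConfusion h)]
      intro D hCD K' hD
      rw [Supp] at hD
      have := hD D (fun _ h => h) K p (supp_mono (.atom p) hCD hK)
      rwa [add_comm] at this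
  | .limp φ ψ, B, L, hyp => by
      rw [Supp]
      by_cases hb : ∃ α, φ = .bang α
      · obtain ⟨α, rfl⟩ := hb
        rw [si1_bang]
        intro C hC hα
        refine exp ψ (fun D hCD M p hψ => ?_)
        refine hyp D (hC.trans hCD) M p ?_
        rw [si1_nb (fun _ h => Fml.noConfusion h)]
        intro E hDE N hE
        rw [Supp, si1_bang] at hE
        have hψN : Supp E N ψ :=
          hE E (fun _ h => h) (supp_mono α (hCD.trans hDE) hα)
        exact si1_elim hψ hDE hψN
      · push_neg at hb
        rw [si1_nb hb]
        intro C hC K' hφK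
        refine exp ψ (fun D hCD M p hψ => ?_)
        have h2 := hyp D (hC.trans hCD) (K' + M) p ?_
        · rwa [← add_assoc] at h2
        · rw [si1_nb (fun _ h => Fml.noConfusion h)]
          intro E hDE N hE
          rw [Supp, si1_nb hb] at hE
          have hψN : Supp E (N + K') ψ :=
            hE E (fun _ h => h) K' (supp_mono _ (hCD.trans hDE) hφK)
          have := si1_elim hψ hDE hψN
          have e : K' + M + N = M + (N + K') := by
            rw [add_comm K' M, add_assoc, add_comm K' N]
          rwa [e]
  | .tens φ ψ, B, L, hyp => by
      rw [Supp]
      intro C hC K p h2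
      refine hyp C hC K p ?_
      rw [si1_nb (fun _ h => Fml.noConfusion h)]
      intro D hCD K' hD
      rw [Supp] at hD
      have := hD D (fun _ h => h) K p (suppInf2_mono hCD h2)
      rwa [add_comm] at this
  | .wth φ ψ, B, L, hyp => by
      rw [Supp]
      constructor
      · refine exp φ (fun C hC K p hφ => ?_)
        refine hyp C hC K p ?_
        rw [si1_nb (fun _ h => Fml.noConfusion h)]
        intro D hCD K' hD
        rw [Supp] at hD
        exact si1_elim hφ hCD hD.1
      · refine exp ψ (fun C hC K p hψ => ?_)
        refine hyp C hC K p ?_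
        rw [si1_nb (fun _ h => Fml.noConfusion h)]
        intro D hCD K' hD
        rw [Supp] at hD
        exact si1_elim hψ hCD hD.2
  | .plus φ ψ, B, L, hyp => by
      rw [Supp]
      intro C hC K p h1 h2
      refine hyp C hC K p ?_
      rw [si1_nb (fun _ h => Fml.noConfusion h)]
      intro D hCD K' hD
      rw [Supp] at hD
      have := hD D (fun _ h => h) K p (suppInf1_mono hCD h1) (suppInf1_mono hCD h2)
      rwa [add_comm] at this
  | .bang φ, B, L, hyp => by
      rw [Supp]
      intro C hC K p hcont
      refine hyp C hC K p ?_
      rw [si1_bang]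
      exact hcont

/-- Semantic `!`-elimination at the empty resource. -/
theorem bang_elim {B : Base} {α : Fml} (h : Supp B 0 (.bang α)) : Supp B 0 α := by
  rw [Supp] at h
  refine exp α (fun C hC K p hI => ?_)
  exact h C hC K p (fun D hCD hα => by
    have := si1_elim hI hCD hα
    rwa [add_zero] at this)

theorem suppMS_zero {B : Base} {K : Multiset Atom} (h : SuppMS B K (0 : Multiset Fml)) :
    K = 0 := by
  obtain ⟨l, h1, h2, -⟩ := h
  cases l with
  | nil => simpa using h2.symm
  | cons x t => simp at h1

theorem suppMS_singleton {B : Base} {K : Multiset Atom} {χ : Fml}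
    (h : SuppMS B K {χ}) : Supp B K χ := by
  obtain ⟨l, h1, h2, h3⟩ := h
  cases l with
  | nil => simp at h1
  | cons x t =>
      cases t with
      | nil =>
          simp only [List.map_cons, List.map_nil] at h1 h2
          rw [Multiset.coe_eq_singleton] at h1
          simp only [List.cons.injEq, and_true] at h1
          simp only [List.sum_cons, List.sum_nil, add_zero] at h2
          have := h3 x (by simp)
          rwa [h1, h2] at this
      | cons y s => simp [Multiset.coe_eq_singleton] at h1

theorem suppMS_singleton_intro {B : Base} {K : Multiset Atom} {χ : Fml}
    (h : Supp B K χ) : SuppMS B K {χ} :=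
  ⟨[(χ, K)], by simp, by simp, by simpa⟩

end Aux

theorem semantic_dereliction (B : Base) (L : Multiset Atom) (φ ψ : Fml)
    (h : SuppSeq B L {φ} ψ) : SuppSeq B L {.bang φ} ψ := by
  intro C hC K hb hn
  have e1 : ({Fml.bang φ} : Multiset Fml).filter (fun χ => isBang χ = true)
      = {Fml.bang φ} := by rw [Multiset.filter_singleton]; simp [isBang]
  have e2 : ({Fml.bang φ} : Multiset Fml).filter (fun χ => isBang χ = false)
      = 0 := by rw [Multiset.filter_singleton]; simp [isBang]
  rw [e1, Multiset.map_singleton] at hb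
  rw [e2] at hn
  have hK : K = 0 := suppMS_zero hn
  subst hK
  have hφ0 : Supp C 0 φ := by
    have := suppMS_singleton hb
    simpa [unbang] using this
  by_cases hbg : ∃ α, φ = .bang α
  · obtain ⟨α, rfl⟩ := hbg
    have hα : Supp C 0 α := bang_elim hφ0
    have f1 : ({Fml.bang α} : Multiset Fml).filter (fun χ => isBang χ = true)
        = {Fml.bang α} := by rw [Multiset.filter_singleton]; simp [isBang]
    have f2 : ({Fml.bang α} : Multiset Fml).filter (fun χ => isBang χ = false)
        = 0 := by rw [Multiset.filter_singleton]; simp [isBang]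
    refine h C hC 0 ?_ ?_
    · rw [f1, Multiset.map_singleton]
      exact suppMS_singleton_intro (by simpa [unbang] using hα)
    · rw [f2]
      exact ⟨[], rfl, rfl, by simp⟩
  · push_neg at hbg
    have hnb : isBang φ = false := by
      cases φ <;> first | rfl | exact absurd rfl (hbg _)
    have f1 : ({φ} : Multiset Fml).filter (fun χ => isBang χ = true) = 0 := by
      simp [Multiset.filter_singleton, hnb]
    have f2 : ({φ} : Multiset Fml).filter (fun χ => isBang χ = false) = {φ} := by
      simp [Multiset.filter_singleton, hnb]
    refine h C hC 0 ?_ ?_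
    · rw [f1]
      exact ⟨[], rfl, rfl, by simp⟩
    · rw [f2]
      exact suppMS_singleton_intro hφ0
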